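/- For positive integers a_1,...,a_n, the numerator N and denominator D of the continued fraction [a_1,...,a_n] satisfy the identity N[a_n,...,a_2,a_1,a_1,a_2,...,a_n] = N[a_1,...,a_n]² + N[a_2,...,a_n]², where N[b_1,...,b_m] denotes the continued fraction numerator. -/

import Mathlib

/-! Euler's splitting rule `N[x ++ y] = N[x] N[y] + N[x without its last entry] N[y without its
first entry]`, applied to `x = l.reverse`, `y = l`, together with the symmetry
`N[l.reverse] = N[l]` of continuants. -/

/-- The continuant: `cont [a₁,...,aₙ]` is the numerator N[a₁,...,aₙ] of the
continued fraction [a₁,...,aₙ], with N[] = 1. -/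
def cont : List ℕ → ℕ
  | [] => 1
  | [a] => a
  | a :: b :: l => a * cont (b :: l) + cont l

theorem cont_cons_cons (a b : ℕ) (l : List ℕ) :
    cont (a :: b :: l) = a * cont (b :: l) + cont l := rfl

theorem cont_append : ∀ x : List ℕ, x ≠ [] → ∀ y : List ℕ, y ≠ [] →
    cont (x ++ y) = cont x * cont y + cont x.dropLast * cont y.tail
  | [a], _, b :: y, _ => by simp [cont]
  | [a, b], _, c :: y, _ => by simp [cont]; ring
  | a :: b :: c :: x, _, y, hy => by
    have h₁ := cont_append (b :: c :: x) (List.cons_ne_nil _ _) y hy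
    have h₂ := cont_append (c :: x) (List.cons_ne_nil _ _) y hy
    simp only [List.cons_append, List.dropLast_cons_cons] at h₁ h₂ ⊢
    rw [cont_cons_cons a b, cont_cons_cons a b, cont_cons_cons a b, h₁, h₂]
    ring

theorem cont_reverse : ∀ l : List ℕ, cont l.reverse = cont l
  | [] => rfl
  | [a] => rfl
  | a :: b :: l => by
    rw [List.reverse_cons, cont_append _ (by simp) [a] (List.cons_ne_nil _ _),
      List.dropLast_reverse, List.tail_cons, cont_reverse (b :: l), cont_reverse l,
      cont_cons_cons]
    simp [cont, mul_comm]

theorem stmt19_general (l : List ℕ) (hl : l ≠ []) :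
    cont (l.reverse ++ l) = (cont l) ^ 2 + (cont l.tail) ^ 2 := by
  rw [cont_append _ (List.reverse_ne_nil_iff.mpr hl) _ hl, List.dropLast_reverse,
    cont_reverse, cont_reverse]
  ring

/-- N[aₙ,...,a₂,a₁,a₁,a₂,...,aₙ] = N[a₁,...,aₙ]² + N[a₂,...,aₙ]². -/
theorem stmt19 (l : List ℕ) (hl : l ≠ []) (hpos : ∀ x ∈ l, 0 < x) :
    cont (l.reverse ++ l) = (cont l) ^ 2 + (cont l.tail) ^ 2 :=
  stmt19_general l hl
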